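/- arXiv:1810.12673 — 5 statements merged into one kernel-verified Lean document; each statement's English description precedes it below -/
import Mathlib

section
/- Seed mutation preserves the property of being a basis: if {e_1, …, e_n} is a ℤ-basis of a lattice N with skew-symmetric form {-,-}, and we define e'_k = -e_j if k = j and e'_k = e_k + max({e_k, e_j}, 0)·e_j otherwise, then {e'_1, …, e'_n} is again a ℤ-basis of N. -/
/-! The mutated family is the image of `e` under the linear map sending `e_j ↦ -e_j` and
`e_k ↦ e_k + c_k e_j`; this map is an involution, as `c_k e_j` is cancelled by `c_k (-e_j)`,
hence an automorphism of `N`, and automorphisms carry bases to bases. -/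

noncomputable section

namespace Module.Basis

variable {ι R M : Type*} [DecidableEq ι] [Ring R] [AddCommGroup M] [Module R M]

def mutationFamily (b : Basis ι R M) (j : ι) (c : ι → R) (k : ι) : M :=
  if k = j then -b j else b k + c k • b j

def mutationEnd (b : Basis ι R M) (j : ι) (c : ι → R) : M →ₗ[R] M :=
  b.constr ℕ (b.mutationFamily j c)

theorem mutationEnd_basis (b : Basis ι R M) (j : ι) (c : ι → R) (k : ι) :
    b.mutationEnd j c (b k) = b.mutationFamily j c k :=
  b.constr_basis ℕ _ k

theorem mutationEnd_involutive (b : Basis ι R M) (j : ι) (c : ι → R) :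
    Function.Involutive (b.mutationEnd j c) := by
  have hj : b.mutationEnd j c (b j) = -b j := by
    simp [mutationEnd_basis, mutationFamily]
  suffices b.mutationEnd j c ∘ₗ b.mutationEnd j c = LinearMap.id from
    fun x => LinearMap.congr_fun this x
  refine b.ext fun k => ?_
  by_cases hk : k = j
  · subst hk
    simp [hj]
  · simp [mutationEnd_basis, mutationFamily, hk, hj]

def mutation (b : Basis ι R M) (j : ι) (c : ι → R) : Basis ι R M :=
  b.map (LinearEquiv.ofInvolutive (b.mutationEnd j c) (b.mutationEnd_involutive j c))

theorem mutation_apply (b : Basis ι R M) (j : ι) (c : ι → R) (k : ι) :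
    b.mutation j c k = if k = j then -b j else b k + c k • b j :=
  b.mutationEnd_basis j c k

end Module.Basis

end

theorem stmt5_general (n : ℕ) (N : Type*) [AddCommGroup N] [Module ℤ N]
    (b : Module.Basis (Fin n) ℤ N) (B : N →ₗ[ℤ] N →ₗ[ℤ] ℤ)
    (j : Fin n) :
    ∃ b' : Module.Basis (Fin n) ℤ N, ∀ k,
      b' k = if k = j then -(b j) else b k + (max (B (b k) (b j)) 0) • b j :=
  ⟨b.mutation j fun k => max (B (b k) (b j)) 0, fun k => by
    -- the `•` of the statement is `zsmul`, not the (propositionally equal) `Module ℤ N` action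
    rw [b.mutation_apply, ← Int.cast_smul_eq_zsmul ℤ, Int.cast_id]⟩

/-- Seed mutation preserves being a ℤ-basis: mutating a basis `e₁, …, eₙ` of a
lattice `N` with integer skew-symmetric form `{-,-}` at index `j` by
`e'_j = -e_j` and `e'_k = e_k + max({e_k, e_j}, 0) • e_j` (k ≠ j) yields
again a ℤ-basis of `N`. -/
theorem stmt5 (n : ℕ) (N : Type*) [AddCommGroup N] [Module ℤ N]
    (b : Module.Basis (Fin n) ℤ N) (B : N →ₗ[ℤ] N →ₗ[ℤ] ℤ)
    (hskew : ∀ x y, B y x = -B x y) (j : Fin n) :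
    ∃ b' : Module.Basis (Fin n) ℤ N, ∀ k,
      b' k = if k = j then -(b j) else b k + (max (B (b k) (b j)) 0) • b j :=
  stmt5_general n N b B j
end

section
/- Seed mutation transforms the exchange matrix by quiver mutation: with e'_k as in seed mutation at index j, the matrix b'_{kl} = {e'_k, e'_l} equals the Fomin–Zelevinsky mutation μ_j of the matrix b_{kl} = {e_k, e_l}. -/
/-- Fomin–Zelevinsky matrix mutation at vertex `j`. -/
def mutMat (n : ℕ) (B : Matrix (Fin n) (Fin n) ℤ) (j : Fin n) :
    Matrix (Fin n) (Fin n) ℤ :=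
  fun i i' => if i = j ∨ i' = j then -B i i'
    else B i i' + Int.sign (B i j) * max (B i j * B j i') 0

/-!
Write `b_{kl} = {e_k, e_l}` and `c_k = max(b_{kj}, 0)`. Since the form is skew, `b_{jj} = 0`, so
bilinearity gives `{e'_k, e'_l} = b_{kl} + c_l b_{kj} + c_k b_{jl}` for `k, l ≠ j`, while pairings
with `e'_j = -e_j` just change sign. Using `b_{lj} = -b_{jl}`, the correction term
`b_{jl} max(b_{kj}, 0) + b_{kj} max(-b_{jl}, 0)` is the tropical expression
`sign(b_{kj}) max(b_{kj} b_{jl}, 0)` of matrix mutation, as a check of the four sign cases shows.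
-/

theorem Int.mul_max_add_mul_max_neg (a c : ℤ) :
    c * max a 0 + a * max (-c) 0 = a.sign * max (a * c) 0 := by
  rcases lt_trichotomy a 0 with ha | rfl | ha
  · rw [Int.sign_eq_neg_one_of_neg ha, max_eq_right ha.le]
    rcases le_total c 0 with hc | hc
    · rw [max_eq_left (neg_nonneg.mpr hc), max_eq_left (mul_nonneg_of_nonpos_of_nonpos ha.le hc)]
      ring
    · rw [max_eq_right (neg_nonpos.mpr hc), max_eq_right (mul_nonpos_of_nonpos_of_nonneg ha.le hc)]
      ring
  · simp
  · rw [Int.sign_eq_one_of_pos ha, max_eq_left ha.le]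
    rcases le_total c 0 with hc | hc
    · rw [max_eq_left (neg_nonneg.mpr hc), max_eq_right (mul_nonpos_of_nonneg_of_nonpos ha.le hc)]
      ring
    · rw [max_eq_right (neg_nonpos.mpr hc), max_eq_left (mul_nonneg ha.le hc)]
      ring

section SkewForm

variable {M : Type*} [AddCommGroup M] [Module ℤ M] {B : M →ₗ[ℤ] M →ₗ[ℤ] ℤ} {e : M}

theorem apply_self_eq_zero_of_skew (hskew : ∀ x y, B y x = -B x y) (x : M) : B x x = 0 := by
  have := hskew x x
  omega

theorem apply_add_smul_add_smul (he : B e e = 0) (x y : M) (c d : ℤ) :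
    B (x + c • e) (y + d • e) = B x y + d * B x e + c * B e y := by
  simp only [map_add, map_zsmul, LinearMap.add_apply, LinearMap.smul_apply, smul_eq_mul, he]
  ring

theorem apply_neg_add_smul (he : B e e = 0) (y : M) (d : ℤ) : B (-e) (y + d • e) = -B e y := by
  simp only [map_neg, map_add, map_zsmul, LinearMap.neg_apply, smul_eq_mul,
    he, neg_zero, mul_zero, add_zero]

theorem apply_add_smul_neg (he : B e e = 0) (x : M) (c : ℤ) : B (x + c • e) (-e) = -B x e := by
  simp only [map_neg, map_add, map_zsmul, LinearMap.add_apply, LinearMap.smul_apply, smul_eq_mul,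
    he, mul_zero, add_zero]

theorem apply_add_max_smul_add_max_smul (hskew : ∀ x y, B y x = -B x y) (x y : M) :
    B (x + max (B x e) 0 • e) (y + max (B y e) 0 • e) =
      B x y + (B x e).sign * max (B x e * B e y) 0 := by
  rw [apply_add_smul_add_smul (apply_self_eq_zero_of_skew hskew e), hskew e y,
    ← Int.mul_max_add_mul_max_neg]
  ring

end SkewForm

/-- Seed mutation transforms the exchange matrix by matrix mutation: with
`e'_j = -e_j` and `e'_k = e_k + max({e_k,e_j},0) • e_j` for `k ≠ j`, the matrix
`b'_{kl} = {e'_k, e'_l}` equals `μ_j` of `b_{kl} = {e_k, e_l}`. -/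
theorem stmt6 (n : ℕ) (N : Type*) [AddCommGroup N] [Module ℤ N]
    (b : Module.Basis (Fin n) ℤ N) (B : N →ₗ[ℤ] N →ₗ[ℤ] ℤ)
    (hskew : ∀ x y, B y x = -B x y) (j : Fin n)
    (e' : Fin n → N)
    (he' : ∀ k, e' k = if k = j then -(b j) else b k + (max (B (b k) (b j)) 0) • b j) :
    ∀ k l, B (e' k) (e' l) = mutMat n (fun i i' => B (b i) (b i')) j k l := by
  intro k l
  have hjj := apply_self_eq_zero_of_skew hskew (b j)
  rw [he', he']
  by_cases hk : k = j <;> by_cases hl : l = j <;> simp only [mutMat, hk, hl, if_true, if_false,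
    true_or, or_true]
  · simp only [map_neg, LinearMap.neg_apply, hjj, neg_zero]
  · exact apply_neg_add_smul hjj _ _
  · exact apply_add_smul_neg hjj _ _
  · exact apply_add_max_smul_add_max_smul hskew _ _
end

section
/- Mutation of a compatible collection of mutation data is again compatible: if {E_i = (w_i,f_i)} satisfies ⟨w_i,f_j⟩ = -⟨w_j,f_i⟩ for all i,j, and we mutate at index k by E_k ↦ -E_k and E_i ↦ E_i - max({E_i,E_k},0)·E_k for i ≠ k (where {E_i,E_k} = ⟨w_i,f_k⟩), then the resulting collection again satisfies the compatibility condition, and each new pair (w'_i, f'_i) still satisfies ⟨w'_i, f'_i⟩ = 0. -/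
/-- The pairing `{(w,f),(w',f')} := ⟨w,f'⟩` on `M ⊕ N` with `M = N = ℤⁿ`. -/
def pairMD (n : ℕ) (p q : (Fin n → ℤ) × (Fin n → ℤ)) : ℤ :=
  ∑ a, p.1 a * q.2 a

lemma pairMD_sub_left (n : ℕ) (p q r : (Fin n → ℤ) × (Fin n → ℤ)) :
    pairMD n (p - q) r = pairMD n p r - pairMD n q r := by
  simp [pairMD, sub_mul, Finset.sum_sub_distrib]

lemma pairMD_sub_right (n : ℕ) (p q r : (Fin n → ℤ) × (Fin n → ℤ)) :
    pairMD n p (q - r) = pairMD n p q - pairMD n p r := by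
  simp [pairMD, mul_sub, Finset.sum_sub_distrib]

lemma pairMD_smul_left (n : ℕ) (c : ℤ) (p q : (Fin n → ℤ) × (Fin n → ℤ)) :
    pairMD n (c • p) q = c * pairMD n p q := by
  simp only [pairMD, Prod.smul_fst, Pi.smul_apply, smul_eq_mul, Finset.mul_sum, mul_assoc]

lemma pairMD_smul_right (n : ℕ) (c : ℤ) (p q : (Fin n → ℤ) × (Fin n → ℤ)) :
    pairMD n p (c • q) = c * pairMD n p q := by
  simp only [pairMD, Prod.smul_snd, Pi.smul_apply, smul_eq_mul, Finset.mul_sum]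
  exact Finset.sum_congr rfl fun a _ => by ring

lemma pairMD_neg_left (n : ℕ) (p q : (Fin n → ℤ) × (Fin n → ℤ)) :
    pairMD n (-p) q = -pairMD n p q := by
  simp [pairMD]

lemma pairMD_neg_right (n : ℕ) (p q : (Fin n → ℤ) × (Fin n → ℤ)) :
    pairMD n p (-q) = -pairMD n p q := by
  simp [pairMD]

/-- Mutation of a compatible collection of mutation data at index `k`
(`E_k ↦ -E_k`, `E_i ↦ E_i - max({E_i,E_k},0) • E_k` for `i ≠ k`) yields again a
compatible collection: each new pair satisfies `⟨w'ᵢ,f'ᵢ⟩ = 0` and the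
compatibility condition `⟨w'ᵢ,f'ⱼ⟩ = -⟨w'ⱼ,f'ᵢ⟩` holds. -/
theorem stmt8 (n : ℕ) (I : Type*) [DecidableEq I] (E : I → (Fin n → ℤ) × (Fin n → ℤ)) (k : I)
    (hann : ∀ i, pairMD n (E i) (E i) = 0)
    (hcomp : ∀ i j, pairMD n (E i) (E j) = -pairMD n (E j) (E i))
    (E' : I → (Fin n → ℤ) × (Fin n → ℤ))
    (hE' : ∀ i, E' i = if i = k then -E k
      else E i - (max (pairMD n (E i) (E k)) 0) • E k) :
    (∀ i, pairMD n (E' i) (E' i) = 0) ∧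
    (∀ i j, pairMD n (E' i) (E' j) = -pairMD n (E' j) (E' i)) := by
  have key : ∀ i j, pairMD n (E' i) (E' j) =
      if i = k then (if j = k then 0
        else -(pairMD n (E k) (E j)))
      else (if j = k then -(pairMD n (E i) (E k))
        else pairMD n (E i) (E j) - (max (pairMD n (E j) (E k)) 0) * pairMD n (E i) (E k)
          - (max (pairMD n (E i) (E k)) 0) * pairMD n (E k) (E j)) := by
    intro i j
    rw [hE' i, hE' j]
    by_cases hi : i = k <;> by_cases hj : j = k
    · rw [if_pos hi, if_pos hj, if_pos hi, if_pos hj, pairMD_neg_left, pairMD_neg_right,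
        neg_neg, hann]
    · rw [if_pos hi, if_neg hj, if_pos hi, if_neg hj, pairMD_neg_left, pairMD_sub_right,
        pairMD_smul_right, hann]
      ring
    · rw [if_neg hi, if_pos hj, if_neg hi, if_pos hj, pairMD_neg_right, pairMD_sub_left,
        pairMD_smul_left, hann]
      ring
    · rw [if_neg hi, if_neg hj, if_neg hi, if_neg hj, pairMD_sub_left, pairMD_sub_right,
        pairMD_sub_right, pairMD_smul_left, pairMD_smul_right, pairMD_smul_right,
        pairMD_smul_left, hann]
      ring
  constructor
  · intro i
    rw [key]
    by_cases hi : i = k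
    · simp [hi]
    · rw [if_neg hi, if_neg hi, hann, hcomp k i]
      ring
  · intro i j
    rw [key, key]
    by_cases hi : i = k <;> by_cases hj : j = k
    · simp [hi, hj]
    · rw [if_pos hi, if_neg hj, if_neg hj, if_pos hi, hcomp k j]
    · rw [if_neg hi, if_pos hj, if_pos hj, if_neg hi, hcomp i k]
    · rw [if_neg hi, if_neg hj, if_neg hj, if_neg hi, hcomp j i, hcomp j k, hcomp k i]
      ring
end

section
/- For triples of positive integers satisfying the Markov equation a² + b² + c² = 3abc, the mutation (a,b,c) ↦ (a, b, 3ab - c) produces another solution of the Markov equation, and every solution is obtained from (1,1,1) by a sequence of such mutations and permutations. -/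
/-! The Markov equation is quadratic in `c` with roots `c` and `c' = 3ab - c`, so by Vieta
`c c' = a² + b² > 0` and mutation preserves positive solutions. If `c` is the largest entry
and `c ≤ c'`, then `a` and `b` lie below both roots, so the quadratic is nonnegative at `a`
and at `b`; this forces `a = b = 1` and then `c = 1`. Hence moving the largest entry to the
end and mutating decreases `a + b + c` until `(1,1,1)` is reached, and since every move is an
involution the path can be read backwards. -/

/-- One elementary move on Markov triples: mutate the last coordinate
`(a,b,c) ↦ (a,b,3ab-c)`, or apply a transposition (these generate all
permutations). -/
def markovStep : ℤ × ℤ × ℤ → ℤ × ℤ × ℤ → Prop :=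
  fun t t' => t' = (t.1, t.2.1, 3 * t.1 * t.2.1 - t.2.2) ∨
    t' = (t.2.1, t.1, t.2.2) ∨ t' = (t.1, t.2.2, t.2.1)

lemma markov_mutate {a b c : ℤ} (ha : 0 < a) (hc : 0 < c)
    (h : a ^ 2 + b ^ 2 + c ^ 2 = 3 * a * b * c) :
    0 < 3 * a * b - c ∧ a ^ 2 + b ^ 2 + (3 * a * b - c) ^ 2 = 3 * a * b * (3 * a * b - c) := by
  constructor
  · have vieta : c * (3 * a * b - c) = a ^ 2 + b ^ 2 := by linear_combination -h
    nlinarith [sq_nonneg b, pow_pos ha 2]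
  · linear_combination h

lemma markov_mutate_lt_or_eq_one {a b c : ℤ} (ha : 0 < a) (hb : 0 < b)
    (hac : a ≤ c) (hbc : b ≤ c) (h : a ^ 2 + b ^ 2 + c ^ 2 = 3 * a * b * c) :
    3 * a * b - c < c ∨ (a = 1 ∧ b = 1 ∧ c = 1) := by
  refine (lt_or_ge (3 * a * b - c) c).imp_right fun hge => ?_
  have hfa : 0 ≤ (c - a) * (3 * a * b - c - a) := mul_nonneg (by omega) (by omega)
  have hfb : 0 ≤ (c - b) * (3 * a * b - c - b) := mul_nonneg (by omega) (by omega)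
  have hba : b ≤ a := by nlinarith
  have hab : a ≤ b := by nlinarith
  obtain rfl := le_antisymm hab hba
  obtain rfl : a = 1 := by nlinarith
  exact ⟨rfl, rfl, by nlinarith⟩

section Moves

variable {s : ℤ × ℤ × ℤ} {a b c : ℤ}

lemma reflTransGen_markovStep_of_swap_fst (h : Relation.ReflTransGen markovStep s (b, a, c)) :
    Relation.ReflTransGen markovStep s (a, b, c) :=
  h.tail (Or.inr (Or.inl rfl))

lemma reflTransGen_markovStep_of_swap_snd (h : Relation.ReflTransGen markovStep s (a, c, b)) :
    Relation.ReflTransGen markovStep s (a, b, c) :=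
  h.tail (Or.inr (Or.inr rfl))

lemma reflTransGen_markovStep_of_mutate
    (h : Relation.ReflTransGen markovStep s (a, b, 3 * a * b - c)) :
    Relation.ReflTransGen markovStep s (a, b, c) :=
  h.tail (Or.inl (by rw [sub_sub_cancel]))

end Moves

theorem markov_reachable {a b c : ℤ} (ha : 0 < a) (hb : 0 < b) (hc : 0 < c)
    (h : a ^ 2 + b ^ 2 + c ^ 2 = 3 * a * b * c) :
    Relation.ReflTransGen markovStep (1, 1, 1) (a, b, c) := by
  induction hn : (a + b + c).toNat using Nat.strong_induction_on generalizing a b c with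
  | _ n ih =>
  wlog hmax : a ≤ c ∧ b ≤ c generalizing a b c
  · rcases le_total a b with hab | hba
    · have hcb : c ≤ b := by omega
      exact reflTransGen_markovStep_of_swap_snd
        (this ha hc hb (by linear_combination h) (by omega) ⟨hab, hcb⟩)
    · have hca : c ≤ a := by omega
      exact reflTransGen_markovStep_of_swap_fst <| reflTransGen_markovStep_of_swap_snd <|
        this hb hc ha (by linear_combination h) (by omega) ⟨hba, hca⟩
  obtain hlt | ⟨rfl, rfl, rfl⟩ := markov_mutate_lt_or_eq_one ha hb hmax.1 hmax.2 h
  · obtain ⟨hpos, hmut⟩ := markov_mutate ha hc h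
    exact reflTransGen_markovStep_of_mutate (ih _ (by omega) ha hb hpos hmut rfl)
  · rfl

/-- For positive integer solutions of the Markov equation `a² + b² + c² = 3abc`,
the mutation `(a,b,c) ↦ (a,b,3ab-c)` produces another positive solution, and
every solution is obtained from `(1,1,1)` by a sequence of such mutations and
permutations. -/
theorem stmt10 :
    (∀ a b c : ℤ, 0 < a → 0 < b → 0 < c → a^2 + b^2 + c^2 = 3*a*b*c →
      0 < 3*a*b - c ∧ a^2 + b^2 + (3*a*b - c)^2 = 3*a*b*(3*a*b - c)) ∧
    (∀ a b c : ℤ, 0 < a → 0 < b → 0 < c → a^2 + b^2 + c^2 = 3*a*b*c →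
      Relation.ReflTransGen markovStep (1, 1, 1) (a, b, c)) :=
  ⟨fun _ _ _ ha _ hc h => markov_mutate ha hc h,
    fun _ _ _ ha hb hc h => markov_reachable ha hb hc h⟩
end

section
/- Let P ⊂ ℚ² be a Fano polygon and let E₁, E₂ be two edges of P with primitive inward-pointing normal vectors w₁, w₂ ∈ M. Let ρ : ℤ² → M send the standard basis to w₁, w₂, and let ρ* : N → ℤ² be the dual map. Then the lattice length of ρ*(E_i) equals |w₁ ∧ w₂| times the lattice length of E_i, for i = 1, 2. -/
/-- The determinant form `u ∧ v` on `M ≅ ℤ²`. -/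
def det2 (u v : ℤ × ℤ) : ℤ := u.1 * v.2 - u.2 * v.1

/-- The canonical pairing between `M ≅ ℤ²` and its dual `N ≅ ℤ²`. -/
def pair2 (w v : ℤ × ℤ) : ℤ := w.1 * v.1 + w.2 * v.2

/-- Let `E` be an edge of a Fano polygon with endpoints `u ≠ v`, lying on a line
with primitive (inward) normal `w i` (so `⟨w i, u - v⟩ = 0`), and let
`ρ : ℤ² → M` send the standard basis to the primitive normals `w 0, w 1` of two
edges, with dual `ρ* : N → ℤ²`, `ρ*(x) = (⟨w 0, x⟩, ⟨w 1, x⟩)`. Then the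
lattice length (gcd of coordinates of the difference of endpoints) of `ρ*(E)`
is `|w 0 ∧ w 1|` times the lattice length of `E`. -/
theorem stmt14 (w : Fin 2 → ℤ × ℤ)
    (hprim : ∀ i, IsCoprime (w i).1 (w i).2)
    (i : Fin 2) (u v : ℤ × ℤ) (huv : u ≠ v)
    (hedge : pair2 (w i) (u - v) = 0) :
    Int.gcd (pair2 (w 0) (u - v)) (pair2 (w 1) (u - v)) =
      (det2 (w 0) (w 1)).natAbs * Int.gcd (u - v).1 (u - v).2 := by
  obtain ⟨a, b, hab⟩ := hprim i
  set d : ℤ × ℤ := u - v with hd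
  set k : ℤ := b * d.1 - a * d.2 with hk
  unfold pair2 at hedge
  have hd1 : d.1 = k * (w i).2 := by
    rw [hk]; linear_combination a * hedge - d.1 * hab
  have hd2 : d.2 = -(k * (w i).1) := by
    rw [hk]; linear_combination b * hedge - d.2 * hab
  have hco : Int.gcd (w i).2 (-(w i).1) = 1 := by
    have h := Int.isCoprime_iff_gcd_eq_one.mp (hprim i)
    simp only [Int.gcd, Int.natAbs_neg] at h ⊢
    rw [Nat.gcd_comm]; exact h
  have hgcdd : Int.gcd d.1 d.2 = k.natAbs := by
    rw [hd1, hd2, ← mul_neg, Int.gcd_mul_left, hco, mul_one]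
  have hi : i = 0 ∨ i = 1 := by omega
  rcases hi with hi | hi <;> subst hi
  · have h0 : pair2 (w 0) d = 0 := hedge
    have h1 : pair2 (w 1) d = k * det2 (w 1) (w 0) := by
      unfold pair2 det2; rw [hd1, hd2]; ring
    rw [h0, h1, Int.gcd_zero_left, hgcdd, Int.natAbs_mul]
    have : (det2 (w 1) (w 0)).natAbs = (det2 (w 0) (w 1)).natAbs := by
      unfold det2; rw [← Int.natAbs_neg]; ring_nf
    rw [this, mul_comm]
  · have h1 : pair2 (w 1) d = 0 := hedge
    have h0 : pair2 (w 0) d = k * det2 (w 0) (w 1) := by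
      unfold pair2 det2; rw [hd1, hd2]; ring
    rw [h1, h0, Int.gcd_zero_right, hgcdd, Int.natAbs_mul]
    rw [mul_comm]
end
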